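/- Suppose q is odd and that b = 1 or b = −1. Extend the sequence (b_ℓ) to all ℓ ≥ 0 by the recursion b_{ℓ+1} = a − b_ℓ⁻¹ (so that b_t = b₀ = b and b_{t+1} = b₁). Then for all 0 ≤ ℓ ≤ t−1 one has b_ℓ·b_{t−ℓ} = 1 and b_ℓ + b_{t−ℓ+1} = a. -/

import Mathlib

/-!
The orbit `b_ℓ` of the Möbius map `x ↦ a - x⁻¹` is the ratio `β_ℓ / β_{ℓ-1}` of consecutive terms
of a solution of `u_{n+1} = a u_n - u_{n-1}`, and `α_{n-1} = (εⁿ - ε⁻ⁿ) / (ε - ε⁻¹)` with `ε = -ω`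
of order `2t` vanishes exactly when `t ∣ n`. Hence `β_t` is a multiple of `β_{t-1}` by `b`, so
`b_t = b`; the condition `b ≠ a_k` keeps `β_1, …, β_t` nonzero. Inversion conjugates the map to its
inverse and fixes `b = ±1`, so walking back from `b_t = b` gives `b_{t-ℓ} = b_ℓ⁻¹`.
-/


open Polynomial

noncomputable section

abbrev SL2 (F : Type*) [Field F] := Matrix.SpecialLinearGroup (Fin 2) F

abbrev PSL2 (F : Type*) [Field F] := SL2 F ⧸ Subgroup.center (SL2 F)

/-- image in `PSL₂(F)` of the matrix `[[1, x], [0, 1]]`. -/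
def uu {F : Type*} [Field F] (x : F) : PSL2 F :=
  QuotientGroup.mk ⟨!![1, x; 0, 1], by simp [Matrix.det_fin_two_of]⟩

/-- image in `PSL₂(F)` of the matrix `[[y, 0], [0, y⁻¹]]`. -/
def hh {F : Type*} [Field F] (y : F) (hy : y ≠ 0) : PSL2 F :=
  QuotientGroup.mk ⟨!![y, 0; 0, y⁻¹], by simp [Matrix.det_fin_two_of, mul_inv_cancel₀ hy]⟩

/-- image in `PSL₂(F)` of the matrix `[[0, 1], [-1, 0]]`. -/
def ss {F : Type*} [Field F] : PSL2 F :=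
  QuotientGroup.mk ⟨!![0, 1; -1, 0], by simp [Matrix.det_fin_two_of]⟩

/-- the sequence `a_k`: `a₁ = a`, `a_{k+1} = a - a_k⁻¹` (with junk value `a₀ = 0`). -/
def aSeq {F : Type*} [Field F] (a : F) : ℕ → F
  | 0 => 0
  | k + 1 => a - (aSeq a k)⁻¹

/-- the sequence `b_ℓ`: `b₀ = b`, `b_{ℓ+1} = a - b_ℓ⁻¹`. -/
def bSeq {F : Type*} [Field F] (a b : F) : ℕ → F
  | 0 => b
  | k + 1 => a - (bSeq a b k)⁻¹

/-- `alph a n = α_{n-1}(a)`, the (index-shifted) Dickson polynomial of the second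
kind values: `α_{-1} = 0`, `α₀ = 1`, `α_{n+1} = a·α_n - α_{n-1}`. -/
def alph {F : Type*} [Field F] (a : F) : ℕ → F
  | 0 => 0
  | 1 => 1
  | n + 2 => a * alph a (n + 1) - alph a n

/-- `bet a b n = β_{n-1}(a,b)`: `β_{-1} = 1`, `β_n = b·α_n - α_{n-1}` for `n ≥ 0`. -/
def bet {F : Type*} [Field F] (a b : F) : ℕ → F
  | 0 => 1
  | n + 1 => b * alph a (n + 1) - alph a n

/-- `gam a b n = γ_{n-1}(a,b)` where `γ_n = α_n + b·β_n`. -/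
def gam {F : Type*} [Field F] (a b : F) (n : ℕ) : F := alph a n + b * bet a b n
section Recurrence

variable {F : Type*} [Field F] {a : F}

theorem alph_add_two (a : F) (n : ℕ) : alph a (n + 2) = a * alph a (n + 1) - alph a n := rfl

theorem bet_add_two (a b : F) (n : ℕ) : bet a b (n + 2) = a * bet a b (n + 1) - bet a b n := by
  cases n <;> simp only [bet, alph] <;> ring

theorem bet_add_two_of_alph_eq_zero (b : F) {n : ℕ} (h : alph a (n + 1) = 0) :
    bet a b (n + 2) = b * bet a b (n + 1) := by
  simp only [bet, alph_add_two, h]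
  ring

theorem orbit_eq_div {u s : ℕ → F} (hu : ∀ n, u (n + 2) = a * u (n + 1) - u n)
    (hs : ∀ n, s (n + 1) = a - (s n)⁻¹) (h0 : s 0 = u 1 / u 0) :
    ∀ n, (∀ j < n, u (j + 1) ≠ 0) → s n = u (n + 1) / u n
  | 0, _ => h0
  | n + 1, hne => by
    have hn : u (n + 1) ≠ 0 := hne n n.lt_succ_self
    rw [hs, orbit_eq_div hu hs h0 n fun j hj => hne j (hj.trans n.lt_succ_self), inv_div, hu,
      eq_div_iff hn, sub_mul, div_mul_cancel₀ _ hn]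

theorem aSeq_eq_div {n : ℕ} (hne : ∀ j < n, alph a (j + 1) ≠ 0) :
    aSeq a n = alph a (n + 1) / alph a n :=
  orbit_eq_div (alph_add_two a) (fun _ => rfl) (by simp [aSeq, alph]) n hne

theorem bSeq_eq_div {b : F} {n : ℕ} (hne : ∀ j < n, bet a b (j + 1) ≠ 0) :
    bSeq a b n = bet a b (n + 1) / bet a b n :=
  orbit_eq_div (bet_add_two a b) (fun _ => rfl) (by simp [bSeq, bet, alph]) n hne

/-- `x ↦ x⁻¹` conjugates `x ↦ a - x⁻¹` to its inverse. -/
theorem orbit_mul_orbit_sub_eq_one {s : ℕ → F} (hs : ∀ n, s (n + 1) = a - (s n)⁻¹) {t : ℕ}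
    (h0 : s 0 * s t = 1) (hne : ∀ m < t, s m ≠ 0) : ∀ l ≤ t, s l * s (t - l) = 1
  | 0, _ => h0
  | l + 1, hl => by
    have hm : t - l = t - (l + 1) + 1 := by omega
    have hinv : s (t - l) = (s l)⁻¹ :=
      (inv_eq_of_mul_eq_one_right (orbit_mul_orbit_sub_eq_one hs h0 hne l (by omega))).symm
    rw [hm, hs] at hinv
    rw [hs, ← hinv, sub_sub_cancel, inv_mul_cancel₀ (hne _ (by omega))]

end Recurrence

section ClosedForm

variable {F K : Type*} [Field F] [Field K] [Algebra F K] {a : F} {ω : K}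

/-- With `ε = -ω`, a root of `X² - aX + 1`, this is `α_{n-1}(a) = (εⁿ - ε⁻ⁿ) / (ε - ε⁻¹)`. -/
theorem alph_closed_form (hω : ω ^ 2 + algebraMap F K a * ω + 1 = 0) (n : ℕ) :
    (ω ^ 2 - 1) * ω ^ n * algebraMap F K (alph a n) = (-1) ^ (n + 1) * ω * (ω ^ (2 * n) - 1) := by
  induction n using Nat.twoStepInduction with
  | zero => simp [alph]
  | one => simp [alph]; ring
  | more n ih₁ ih₂ =>
    rw [alph_add_two, map_sub, map_mul]
    linear_combination (algebraMap F K a * ω) * ih₂ - ω ^ 2 * ih₁ +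
      ((-1) ^ n * ω * (ω ^ (2 * n + 2) - 1)) * hω

theorem alph_eq_zero_iff (hω : ω ^ 2 + algebraMap F K a * ω + 1 = 0) (hω₂ : ω ^ 2 ≠ 1) (n : ℕ) :
    alph a n = 0 ↔ ω ^ (2 * n) = 1 := by
  have hω₀ : ω ≠ 0 := by rintro rfl; simp at hω
  have h := alph_closed_form hω n
  rw [← (algebraMap F K).injective.eq_iff, map_zero, ← sub_eq_zero (a := ω ^ (2 * n))]
  constructor
  · intro h0
    rw [h0, mul_zero] at h
    simpa [hω₀] using h.symm
  · intro h1
    rw [h1, mul_zero] at h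
    simpa [sub_eq_zero, hω₂, hω₀] using h

end ClosedForm

section FirstZero

variable {F : Type*} [Field F] {a b : F} {t : ℕ}

theorem alph_ne_zero (hzero : ∀ n, alph a n = 0 ↔ t ∣ n) {j : ℕ} (hj₀ : 0 < j) (hjt : j < t) :
    alph a j ≠ 0 :=
  fun h => Nat.not_dvd_of_pos_of_lt hj₀ hjt ((hzero j).1 h)

theorem bet_ne_zero (hzero : ∀ n, alph a n = 0 ↔ t ∣ n) (hb₀ : b ≠ 0)
    (hb : ∀ k, 1 ≤ k → k ≤ t - 1 → b⁻¹ ≠ aSeq a k) : ∀ j ≤ t, bet a b j ≠ 0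
  | 0, _ => one_ne_zero
  | 1, _ => by simpa [bet, alph] using hb₀
  | n + 2, hn => by
    have hn₁ : alph a (n + 1) ≠ 0 := alph_ne_zero hzero n.succ_pos (by omega)
    show b * alph a (n + 2) - alph a (n + 1) ≠ 0
    rcases (show n + 2 = t ∨ n + 2 < t by omega) with rfl | hlt
    · rwa [(hzero _).2 dvd_rfl, mul_zero, zero_sub, neg_ne_zero]
    · intro h
      refine hb (n + 1) (by omega) (by omega) ?_
      rw [aSeq_eq_div fun j hj => alph_ne_zero hzero j.succ_pos (by omega), eq_div_iff hn₁,
        ← sub_eq_zero.1 h, inv_mul_cancel_left₀ hb₀]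

theorem bSeq_ne_zero (hzero : ∀ n, alph a n = 0 ↔ t ∣ n) (hb₀ : b ≠ 0)
    (hb : ∀ k, 1 ≤ k → k ≤ t - 1 → b⁻¹ ≠ aSeq a k) {m : ℕ} (hm : m < t) : bSeq a b m ≠ 0 := by
  rw [bSeq_eq_div fun j hj => bet_ne_zero hzero hb₀ hb _ (by omega)]
  exact div_ne_zero (bet_ne_zero hzero hb₀ hb _ hm) (bet_ne_zero hzero hb₀ hb _ hm.le)

theorem bSeq_eq_self (hzero : ∀ n, alph a n = 0 ↔ t ∣ n) (hb₀ : b ≠ 0)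
    (hb : ∀ k, 1 ≤ k → k ≤ t - 1 → b⁻¹ ≠ aSeq a k) : bSeq a b t = b := by
  obtain _ | n := t
  · rfl
  rw [bSeq_eq_div fun j hj => bet_ne_zero hzero hb₀ hb _ hj,
    bet_add_two_of_alph_eq_zero b ((hzero _).2 dvd_rfl),
    mul_div_cancel_right₀ _ (bet_ne_zero hzero hb₀ hb _ le_rfl)]

theorem bSeq_mul_bSeq_sub (hzero : ∀ n, alph a n = 0 ↔ t ∣ n) (hbb : b * b = 1)
    (hb : ∀ k, 1 ≤ k → k ≤ t - 1 → b ≠ aSeq a k) {l : ℕ} (hl : l ≤ t) :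
    bSeq a b l * bSeq a b (t - l) = 1 := by
  have hb₀ : b ≠ 0 := left_ne_zero_of_mul_eq_one hbb
  have hb' : ∀ k, 1 ≤ k → k ≤ t - 1 → b⁻¹ ≠ aSeq a k := by
    rwa [inv_eq_of_mul_eq_one_right hbb]
  refine orbit_mul_orbit_sub_eq_one (fun _ => rfl) ?_ (fun m hm => bSeq_ne_zero hzero hb₀ hb' hm) l hl
  rw [bSeq_eq_self hzero hb₀ hb']
  exact hbb

end FirstZero

theorem stmt16_general (F : Type*) [Field F] [Fintype F] (q : ℕ) (hq : Fintype.card F = q)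
    (a : F)
    (ω : AlgebraicClosure F) (hroot : aeval ω (X ^ 2 + C a * X + 1 : F[X]) = 0)
    (hord : orderOf ω = q + 1)
    (hqodd : Odd q) (t : ℕ) (ht : t = (q + 1) / Nat.gcd 2 (q + 1)) (b : F)
    (hb : ∀ k : ℕ, 1 ≤ k → k ≤ t - 1 → b ≠ aSeq a k)
    (hb1 : b = 1 ∨ b = -1) :
    ∀ l : ℕ, l ≤ t - 1 →
      bSeq a b l * bSeq a b (t - l) = 1 ∧
      bSeq a b l + bSeq a b (t - l + 1) = a := by
  have hq₂ : 2 ≤ q := hq ▸ Fintype.one_lt_card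
  obtain ⟨m, rfl⟩ := hqodd
  have hord₂ : orderOf ω = 2 * t := by
    rw [hord, ht, Nat.gcd_eq_left ⟨m + 1, by ring⟩]
    omega
  have hω : ω ^ 2 + algebraMap F _ a * ω + 1 = 0 := by simpa using hroot
  have hω₂ : ω ^ 2 ≠ 1 := fun h => by
    have := Nat.le_of_dvd two_pos (hord₂ ▸ orderOf_dvd_of_pow_eq_one h)
    omega
  have hzero : ∀ n, alph a n = 0 ↔ t ∣ n := fun n => by
    rw [alph_eq_zero_iff hω hω₂, ← orderOf_dvd_iff_pow_eq_one, hord₂,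
      Nat.mul_dvd_mul_iff_left two_pos]
  have hbb : b * b = 1 := by rcases hb1 with rfl | rfl <;> norm_num
  intro l hl
  have hmul := bSeq_mul_bSeq_sub hzero hbb hb (l := l) (by omega)
  refine ⟨hmul, ?_⟩
  rw [show bSeq a b (t - l + 1) = a - (bSeq a b (t - l))⁻¹ from rfl,
    inv_eq_of_mul_eq_one_left hmul, add_sub_cancel]

theorem stmt16 (F : Type*) [Field F] [Fintype F] (q : ℕ) (hq : Fintype.card F = q)
    (a : F) (hirr : Irreducible (X ^ 2 + C a * X + 1 : F[X]))
    (ω : AlgebraicClosure F) (hroot : aeval ω (X ^ 2 + C a * X + 1 : F[X]) = 0)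
    (hord : orderOf ω = q + 1)
    (hqodd : Odd q) (t : ℕ) (ht : t = (q + 1) / Nat.gcd 2 (q + 1)) (b : F)
    (hb : ∀ k : ℕ, 1 ≤ k → k ≤ t - 1 → b ≠ aSeq a k)
    (hb1 : b = 1 ∨ b = -1) :
    ∀ l : ℕ, l ≤ t - 1 →
      bSeq a b l * bSeq a b (t - l) = 1 ∧
      bSeq a b l + bSeq a b (t - l + 1) = a :=
  stmt16_general F q hq a ω hroot hord hqodd t ht b hb hb1

end
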